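/- Fix μ ∈ ℝ, D > 0, V ∈ ℝ with μV ≠ 0, V_x ∈ ℝ, and α ∈ [0,1]. For h > 0 set Pe(h) = (μ/D)V·h, Q(h) = (μ/D)V_x·h²/2, Pe⁺(h) = Pe(h) − αQ(h) and P(h) = Pe(h)/2 − αQ(h)/4. Then the function h ↦ [(1 − Pe⁺(h)/2 − (1 + αQ(h)/2)·exp(−P(h)))/(Pe⁺(h)·((1 + αQ(h))·exp(−Pe(h)) − 1))] / W̃(−Pe⁺(h), αQ(h)/4) tends to 1 as h → 0 from the right, where W̃(z,q) = (exp(z/2 + q) − 1 − z/2)/(z·(exp(z) − 1)) for z ≠ 0. -/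

import Mathlib

/-- `W̃(z,q) = (exp(z/2 + q) − 1 − z/2) / (z (exp z − 1))` (for `z ≠ 0`). -/
noncomputable def Wtilde (z q : ℝ) : ℝ :=
  (Real.exp (z / 2 + q) - 1 - z / 2) / (z * (Real.exp z - 1))

/-!
Write `Pe = c h` and `α Q = b h²` with `c = μ V / D ≠ 0` and `b = α μ V_x / (2 D)`. The ratio
factors as `(e^{-Pe⁺} - 1) / ((1 + α Q) e^{-Pe} - 1) · (1 - R / N)`, where `N` is the numerator
of `W̃` and `R = e^{-P} (e^{α Q / 2} - 1 - α Q / 2) = O(h⁴)`. Both terms of the first factor are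
`-c h + O(h²)`, so it tends to `1`. Taylor expansion gives `N = (c² + 2 b) h² / 8 + O(h³)`, and
`N = c³ h³ / 6 + O(h⁴)` in the degenerate case `c² + 2 b = 0`; either way `R / N → 0`.
-/

open Filter Real Topology Finset
open scoped Nat

theorem tendsto_exp_sub_sum_range_div_pow {ι : Type*} {l : Filter ι} {u p : ι → ℝ} {r : ℝ}
    (n : ℕ) (hu : Tendsto u l (𝓝 0)) (hup : Tendsto (fun x ↦ u x / p x) l (𝓝 r)) :
    Tendsto (fun x ↦ (exp (u x) - ∑ m ∈ range n, u x ^ m / m !) / p x ^ n) l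
      (𝓝 (r ^ n / n !)) := by
  set C : ℝ := (n + 1).succ / ((n + 1)! * (n + 1 : ℕ))
  have hrem : Tendsto (fun x ↦ (exp (u x) - ∑ m ∈ range (n + 1), u x ^ m / m !) / p x ^ n) l
      (𝓝 0) := by
    have hu_abs : Tendsto (fun x ↦ |u x|) l (𝓝 0) := by simpa using hu.abs
    have hbound : Tendsto (fun x ↦ C * |u x| * |u x / p x| ^ n) l (𝓝 0) := by
      simpa using (hu_abs.const_mul C).mul (hup.abs.pow n)
    refine squeeze_zero_norm' ?_ hbound
    filter_upwards [hu_abs.eventually_le_const one_pos] with x hx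
    rw [Real.norm_eq_abs, abs_div, abs_pow, abs_div, div_pow]
    calc |exp (u x) - ∑ m ∈ range (n + 1), u x ^ m / m !| / |p x| ^ n
        ≤ |u x| ^ (n + 1) * C / |p x| ^ n := by
          gcongr
          exact Real.exp_bound (by simpa using hx) n.succ_pos
      _ = C * |u x| * (|u x| ^ n / |p x| ^ n) := by ring
  convert (hup.pow n).div_const (n ! : ℝ) |>.add hrem using 1
  · ext x
    rw [sum_range_succ, div_pow]
    ring
  · simp

theorem Filter.Tendsto.div_of_tendsto_div {ι : Type*} {l : Filter ι} {f g p : ι → ℝ} {a b : ℝ}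
    (hf : Tendsto (fun x ↦ f x / p x) l (𝓝 a)) (hg : Tendsto (fun x ↦ g x / p x) l (𝓝 b))
    (hb : b ≠ 0) (hp : ∀ᶠ x in l, p x ≠ 0) :
    Tendsto (fun x ↦ f x / g x) l (𝓝 (a / b)) :=
  (hf.div hg hb).congr' <| hp.mono fun _ hx ↦ div_div_div_cancel_right₀ hx _ _

theorem Filter.Tendsto.eventually_ne_zero_of_div {ι : Type*} {l : Filter ι} {g p : ι → ℝ} {b : ℝ}
    (hg : Tendsto (fun x ↦ g x / p x) l (𝓝 b)) (hb : b ≠ 0) : ∀ᶠ x in l, g x ≠ 0 :=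
  (hg.eventually_ne hb).mono fun _ hx hg0 ↦ hx (by rw [hg0, zero_div])

theorem tendsto_linear_add_quadratic_div_self (x y : ℝ) :
    Tendsto (fun h : ℝ ↦ (x * h + y * h ^ 2) / h) (𝓝[≠] 0) (𝓝 x) := by
  have hlin : Tendsto (fun h : ℝ ↦ x + y * h) (𝓝[≠] 0) (𝓝 x) :=
    tendsto_nhdsWithin_of_tendsto_nhds ((Continuous.tendsto' (by fun_prop) 0 x (by simp)))
  refine hlin.congr' (eventually_mem_nhdsWithin.mono fun h (hh : h ≠ 0) ↦ ?_)
  field_simp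

theorem tendsto_linear_add_quadratic (x y : ℝ) :
    Tendsto (fun h : ℝ ↦ x * h + y * h ^ 2) (𝓝[≠] 0) (𝓝 0) :=
  tendsto_nhdsWithin_of_tendsto_nhds ((Continuous.tendsto' (by fun_prop) 0 0 (by simp)))

noncomputable def wtildeNum (z q : ℝ) : ℝ :=
  exp (z / 2 + q) - 1 - z / 2

/-- The `s_j`-coefficient of the exact (trapezoidal) form of `f^{i,+}`, with `q = α Q`. -/
noncomputable def sjCoeffExact (Pe q : ℝ) : ℝ :=
  (1 - (Pe - q) / 2 - (1 + q / 2) * exp (-(Pe / 2 - q / 4))) /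
    ((Pe - q) * ((1 + q) * exp (-Pe) - 1))

theorem sjCoeffExact_div_Wtilde (Pe q : ℝ)
    (hW : wtildeNum (-(Pe - q)) (q / 4) ≠ 0) :
    sjCoeffExact Pe q / Wtilde (-(Pe - q)) (q / 4) =
      (exp (-(Pe - q)) - 1) / ((1 + q) * exp (-Pe) - 1) *
        (1 - exp (-(Pe / 2 - q / 4)) * (exp (q / 2) - 1 - q / 2) /
          wtildeNum (-(Pe - q)) (q / 4)) := by
  have hexp : exp (-(Pe - q) / 2 + q / 4) = exp (-(Pe / 2 - q / 4)) * exp (q / 2) := by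
    rw [← exp_add]; ring_nf
  rcases eq_or_ne (Pe - q) 0 with hPe | hPe
  · simp [sjCoeffExact, hPe]
  simp only [sjCoeffExact, Wtilde, wtildeNum] at hW ⊢
  rw [hexp] at hW ⊢
  generalize exp (-(Pe / 2 - q / 4)) = E₁ at hW ⊢
  generalize exp (q / 2) = E₂ at hW ⊢
  have hW' : 2 * (E₁ * E₂ - 1) - -(Pe - q) ≠ 0 := by
    contrapose! hW
    linarith
  field_simp
  ring

section Expansions

variable (c b : ℝ)

theorem tendsto_exp_neg_sub_sub_one_div :
    Tendsto (fun h : ℝ ↦ (exp (-(c * h - b * h ^ 2)) - 1) / h) (𝓝[≠] 0) (𝓝 (-c)) := by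
  have := tendsto_exp_sub_sum_range_div_pow (u := fun h ↦ -(c * h - b * h ^ 2)) (p := id) 1
    ((tendsto_linear_add_quadratic (-c) b).congr fun h ↦ by ring)
    ((tendsto_linear_add_quadratic_div_self (-c) b).congr fun h ↦ by simp only [id]; ring)
  simpa using this

theorem tendsto_one_add_mul_exp_sub_one_div :
    Tendsto (fun h : ℝ ↦ ((1 + b * h ^ 2) * exp (-(c * h)) - 1) / h) (𝓝[≠] 0) (𝓝 (-c)) := by
  have hexp : Tendsto (fun h : ℝ ↦ (exp (-(c * h)) - 1) / h) (𝓝[≠] 0) (𝓝 (-c)) := by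
    simpa using tendsto_exp_neg_sub_sub_one_div c 0
  have hcorr : Tendsto (fun h : ℝ ↦ b * h * exp (-(c * h))) (𝓝[≠] 0) (𝓝 0) :=
    tendsto_nhdsWithin_of_tendsto_nhds (Continuous.tendsto' (by fun_prop) 0 0 (by simp))
  have := hexp.add hcorr
  rw [add_zero] at this
  refine this.congr' ?_
  filter_upwards [self_mem_nhdsWithin] with h (hh : h ≠ 0)
  field_simp
  ring

theorem tendsto_exp_mul_exp_sub_one_sub_self_div_pow {k : ℕ} (hk : k < 4) :
    Tendsto (fun h : ℝ ↦
        exp (-(c * h / 2 - b * h ^ 2 / 4)) * (exp (b * h ^ 2 / 2) - 1 - b * h ^ 2 / 2) / h ^ k)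
      (𝓝[≠] 0) (𝓝 0) := by
  have htaylor : Tendsto (fun h : ℝ ↦ (exp (b * h ^ 2 / 2) - 1 - b * h ^ 2 / 2) / h ^ 4)
      (𝓝[≠] 0) (𝓝 ((b / 2) ^ 2 / 2)) := by
    have hu : Tendsto (fun h : ℝ ↦ b * h ^ 2 / 2) (𝓝[≠] 0) (𝓝 0) :=
      tendsto_nhdsWithin_of_tendsto_nhds (Continuous.tendsto' (by fun_prop) 0 0 (by simp))
    have hup : Tendsto (fun h : ℝ ↦ b * h ^ 2 / 2 / h ^ 2) (𝓝[≠] 0) (𝓝 (b / 2)) :=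
      tendsto_const_nhds.congr' <| eventually_mem_nhdsWithin.mono fun h (hh : h ≠ 0) ↦ by
        field_simp
    have := tendsto_exp_sub_sum_range_div_pow 2 hu hup
    norm_num [sum_range_succ] at this
    refine this.congr fun h ↦ ?_
    ring
  have hpow : Tendsto (fun h : ℝ ↦ h ^ (4 - k) * exp (-(c * h / 2 - b * h ^ 2 / 4))) (𝓝[≠] 0)
      (𝓝 0) :=
    tendsto_nhdsWithin_of_tendsto_nhds
      (Continuous.tendsto' (by fun_prop) 0 0 (by simp [zero_pow (by omega : 4 - k ≠ 0)]))
  have := hpow.mul htaylor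
  rw [zero_mul] at this
  refine this.congr' ?_
  filter_upwards [self_mem_nhdsWithin] with h (hh : h ≠ 0)
  rw [show h ^ 4 = h ^ (4 - k) * h ^ k by rw [← pow_add, Nat.sub_add_cancel hk.le]]
  field_simp

theorem tendsto_wtildeNum_div_sq :
    Tendsto (fun h : ℝ ↦ wtildeNum (-(c * h - b * h ^ 2)) (b * h ^ 2 / 4) / h ^ 2) (𝓝[≠] 0)
      (𝓝 ((c ^ 2 + 2 * b) / 8)) := by
  set u : ℝ → ℝ := fun h ↦ -(c * h - b * h ^ 2) / 2 + b * h ^ 2 / 4 with hu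
  have htaylor := tendsto_exp_sub_sum_range_div_pow (u := u) (p := id) 2
    ((tendsto_linear_add_quadratic (-c / 2) (3 * b / 4)).congr fun h ↦ by ring)
    ((tendsto_linear_add_quadratic_div_self (-c / 2) (3 * b / 4)).congr fun h ↦ by
      simp only [id, hu]; ring)
  norm_num [sum_range_succ] at htaylor
  have hlim : (-c / 2) ^ 2 / 2 + b / 4 = (c ^ 2 + 2 * b) / 8 := by ring
  rw [← hlim]
  refine (htaylor.add_const (b / 4)).congr' ?_
  filter_upwards [self_mem_nhdsWithin] with h (hh : h ≠ 0)
  simp only [wtildeNum, hu]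
  rw [div_add' _ _ _ (pow_ne_zero 2 hh), div_left_inj' (pow_ne_zero 2 hh)]
  ring

theorem tendsto_wtildeNum_div_cube (hb : c ^ 2 + 2 * b = 0) :
    Tendsto (fun h : ℝ ↦ wtildeNum (-(c * h - b * h ^ 2)) (b * h ^ 2 / 4) / h ^ 3) (𝓝[≠] 0)
      (𝓝 (c ^ 3 / 6)) := by
  set u : ℝ → ℝ := fun h ↦ -(c * h - b * h ^ 2) / 2 + b * h ^ 2 / 4 with hu
  have htaylor := tendsto_exp_sub_sum_range_div_pow (u := u) (p := id) 3
    ((tendsto_linear_add_quadratic (-c / 2) (3 * b / 4)).congr fun h ↦ by ring)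
    ((tendsto_linear_add_quadratic_div_self (-c / 2) (3 * b / 4)).congr fun h ↦ by
      simp only [id, hu]; ring)
  norm_num [sum_range_succ, Nat.factorial] at htaylor
  have hpoly : Tendsto (fun h : ℝ ↦ -3 * b * c / 8 + 9 * b ^ 2 * h / 32) (𝓝[≠] 0)
      (𝓝 (-3 * b * c / 8)) :=
    tendsto_nhdsWithin_of_tendsto_nhds (Continuous.tendsto' (by fun_prop) 0 _ (by simp))
  have hlim : (-c / 2) ^ 3 / 6 + -3 * b * c / 8 = c ^ 3 / 6 := by
    linear_combination (-3 * c / 16) * hb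
  rw [← hlim]
  refine (htaylor.add hpoly).congr' ?_
  filter_upwards [self_mem_nhdsWithin] with h (hh : h ≠ 0)
  simp only [wtildeNum, hu]
  rw [div_add' _ _ _ (pow_ne_zero 3 hh), div_left_inj' (pow_ne_zero 3 hh)]
  linear_combination (-h ^ 2 / 8) * hb

theorem exists_tendsto_wtildeNum_div_pow (hc : c ≠ 0) :
    ∃ k < 4, ∃ L ≠ 0, Tendsto
      (fun h : ℝ ↦ wtildeNum (-(c * h - b * h ^ 2)) (b * h ^ 2 / 4) / h ^ k) (𝓝[≠] 0) (𝓝 L) := by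
  by_cases hb : c ^ 2 + 2 * b = 0
  · exact ⟨3, by norm_num, c ^ 3 / 6, by positivity, tendsto_wtildeNum_div_cube c b hb⟩
  · exact ⟨2, by norm_num, _, div_ne_zero hb (by norm_num), tendsto_wtildeNum_div_sq c b⟩

end Expansions

theorem tendsto_sjCoeffExact_div_Wtilde {c : ℝ} (hc : c ≠ 0) (b : ℝ) :
    Tendsto (fun h : ℝ ↦
        sjCoeffExact (c * h) (b * h ^ 2) / Wtilde (-(c * h - b * h ^ 2)) (b * h ^ 2 / 4))
      (𝓝[≠] 0) (𝓝 1) := by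
  obtain ⟨k, hk, L, hL, hW⟩ := exists_tendsto_wtildeNum_div_pow c b hc
  have hc' : -c ≠ 0 := neg_ne_zero.mpr hc
  have hmain := (tendsto_exp_neg_sub_sub_one_div c b).div_of_tendsto_div
    (tendsto_one_add_mul_exp_sub_one_div c b) hc' self_mem_nhdsWithin
  have hrem := (tendsto_exp_mul_exp_sub_one_sub_self_div_pow c b hk).div_of_tendsto_div hW hL
    (eventually_mem_nhdsWithin.mono fun h (hh : h ≠ 0) ↦ pow_ne_zero k hh)
  rw [div_self hc'] at hmain
  rw [zero_div] at hrem
  have := hmain.mul (hrem.const_sub 1)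
  rw [sub_zero, mul_one] at this
  refine this.congr' ?_
  filter_upwards [hW.eventually_ne_zero_of_div hL] with h hWh
  exact (sjCoeffExact_div_Wtilde _ _ hWh).symm

theorem asymptotic_sj_coefficient_plus_general (μ D V Vx α : ℝ)
    (hD : D > 0) (hμV : μ * V ≠ 0) :
    Filter.Tendsto
      (fun h : ℝ =>
        let Pe := (μ / D) * V * h
        let Q := (μ / D) * Vx * h ^ 2 / 2
        let Pep := Pe - α * Q
        let P := Pe / 2 - α * Q / 4
        ((1 - Pep / 2 - (1 + α * Q / 2) * Real.exp (-P)) /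
          (Pep * ((1 + α * Q) * Real.exp (-Pe) - 1))) /
          Wtilde (-Pep) (α * Q / 4))
      (nhdsWithin 0 (Set.Ioi 0)) (nhds 1) := by
  have hc : μ / D * V ≠ 0 := by
    rw [div_mul_eq_mul_div]
    exact div_ne_zero hμV hD.ne'
  refine ((tendsto_sjCoeffExact_div_Wtilde hc (α * (μ / D * Vx) / 2)).mono_left
    (nhdsWithin_mono 0 fun h (hh : 0 < h) ↦ hh.ne')).congr fun h ↦ ?_
  have hq : α * (μ / D * Vx) / 2 * h ^ 2 = α * (μ / D * Vx * h ^ 2 / 2) := by ring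
  simp only [sjCoeffExact, hq]

theorem asymptotic_sj_coefficient_plus (μ D V Vx α : ℝ)
    (hD : D > 0) (hμV : μ * V ≠ 0) (hα : α ∈ Set.Icc (0:ℝ) 1) :
    Filter.Tendsto
      (fun h : ℝ =>
        let Pe := (μ / D) * V * h
        let Q := (μ / D) * Vx * h ^ 2 / 2
        let Pep := Pe - α * Q
        let P := Pe / 2 - α * Q / 4
        ((1 - Pep / 2 - (1 + α * Q / 2) * Real.exp (-P)) /
          (Pep * ((1 + α * Q) * Real.exp (-Pe) - 1))) /
          Wtilde (-Pep) (α * Q / 4))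
      (nhdsWithin 0 (Set.Ioi 0)) (nhds 1) :=
  asymptotic_sj_coefficient_plus_general μ D V Vx α hD hμV
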